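/- arXiv:1807.00811 — 4 statements merged into one kernel-verified Lean document; each statement's English description precedes it below -/
import Mathlib

section
/- A finite set E of d points in Z^2 is a minimizer of the edge perimeter #Θ₂ among d-element subsets of Z^2 if and only if its number of unit bonds equals ⌊2d − 2√d⌋. -/
open Finset Filter

/-- Adjacency in `ℤ²`: Euclidean distance one. -/
def adj2 (x y : ℤ × ℤ) : Prop :=
  (x.1 - y.1) ^ 2 + (x.2 - y.2) ^ 2 = 1

/-- Cardinality of the edge boundary `Θ₂(E)` in `ℤ²` (ordered pairs). -/
noncomputable def theta2 (E : Finset (ℤ × ℤ)) : ℕ :=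
  Set.ncard {p : (ℤ × ℤ) × (ℤ × ℤ) | adj2 p.1 p.2 ∧ p.1 ∈ E ∧ p.2 ∉ E}

/-- Number of ordered bonded pairs of `E ⊂ ℤ²`; this equals `2 b(E)`. -/
noncomputable def bondPairs2 (E : Finset (ℤ × ℤ)) : ℕ :=
  Set.ncard {p : (ℤ × ℤ) × (ℤ × ℤ) | adj2 p.1 p.2 ∧ p.1 ∈ E ∧ p.2 ∈ E}

/-- Number of unit bonds `b(E) = ½·#{(x,y) ∈ E×E : |x−y|=1}`. -/
noncomputable def bonds2 (E : Finset (ℤ × ℤ)) : ℕ := bondPairs2 E / 2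

/-!
Every ordered pair `(x, y)` with `x ∈ E` and `|x - y| = 1` is either a boundary pair or a bonded
pair, so `#Θ₂(E) = 4d - 2b(E)`, and minimizing the perimeter means maximizing the bonds.
Horizontal bonds number at most `d` minus the number of occupied rows `r` (the rightmost point of a
row has no right neighbour), and likewise vertically with the number of occupied columns `c`; as
`d ≤ r c`, this gives `b(E) ≤ 2d - (r + c) ≤ 2d - 2√d`. Conversely, filling rows of length
`⌊√(d-1)⌋ + 1` one after the other produces a set with `⌊2d - 2√d⌋` bonds.
-/

section AddCommGroup

variable {α : Type*} [AddCommGroup α] [DecidableEq α]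

theorem ncard_setOf_sub_mem_eq_sum (S E : Finset α) (P : α → Prop) [DecidablePred P] :
    {p : α × α | p.2 - p.1 ∈ S ∧ p.1 ∈ E ∧ P p.2}.ncard = ∑ v ∈ S, #{x ∈ E | P (x + v)} := by
  have hset : {p : α × α | p.2 - p.1 ∈ S ∧ p.1 ∈ E ∧ P p.2} =
      ↑({q ∈ E ×ˢ S | P (q.1 + q.2)}.image fun q => (q.1, q.1 + q.2)) := by
    ext ⟨x, y⟩
    simp only [Set.mem_ofPred_eq, coe_image, coe_filter, mem_product, Set.mem_image,
      Prod.mk.injEq, Prod.exists]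
    constructor
    · rintro ⟨hS, hE, hP⟩
      exact ⟨x, y - x, ⟨⟨hE, hS⟩, by simpa using hP⟩, rfl, by abel⟩
    · rintro ⟨a, v, ⟨⟨hE, hS⟩, hP⟩, rfl, rfl⟩
      exact ⟨by simpa using hS, hE, hP⟩
  rw [hset, Set.ncard_coe_finset, card_image_of_injective _ fun q q' h => by
    simp only [Prod.mk.injEq] at h; exact Prod.ext h.1 (by simpa [h.1] using h.2)]
  rw [card_filter, sum_product, sum_comm]
  simp only [← card_filter]

theorem card_filter_add_neg_mem (E : Finset α) (v : α) :
    #{x ∈ E | x + -v ∈ E} = #{x ∈ E | x + v ∈ E} :=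
  card_nbij' (· - v) (· + v) (fun x hx => by simp_all [sub_eq_add_neg])
    (fun x hx => by simp_all [← sub_eq_add_neg]) (fun x _ => by simp) (fun x _ => by simp)

end AddCommGroup

def unitSteps : Finset (ℤ × ℤ) := {(1, 0), (-1, 0), (0, 1), (0, -1)}

theorem sq_add_sq_eq_one_iff_mem_unitSteps (u w : ℤ) :
    u ^ 2 + w ^ 2 = 1 ↔ (u, w) ∈ unitSteps := by
  simp only [unitSteps, mem_insert, mem_singleton, Prod.mk.injEq]
  constructor
  · intro h
    obtain ⟨hu, hu'⟩ := abs_le_of_sq_le_sq' (b := (1 : ℤ)) (by nlinarith [sq_nonneg w]) zero_le_one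
    obtain ⟨hw, hw'⟩ := abs_le_of_sq_le_sq' (b := (1 : ℤ)) (by nlinarith [sq_nonneg u]) zero_le_one
    interval_cases u <;> interval_cases w <;> simp_all
  · rintro (⟨rfl, rfl⟩ | ⟨rfl, rfl⟩ | ⟨rfl, rfl⟩ | ⟨rfl, rfl⟩) <;> norm_num

theorem adj2_iff_sub_mem_unitSteps (x y : ℤ × ℤ) : adj2 x y ↔ y - x ∈ unitSteps := by
  rw [← sq_add_sq_eq_one_iff_mem_unitSteps, adj2, ← neg_sub y.1, ← neg_sub y.2, neg_sq, neg_sq]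
  rfl

theorem theta2_eq_sum (E : Finset (ℤ × ℤ)) :
    theta2 E = ∑ v ∈ unitSteps, #{x ∈ E | x + v ∉ E} := by
  simp only [theta2, adj2_iff_sub_mem_unitSteps]
  exact ncard_setOf_sub_mem_eq_sum _ _ (· ∉ E)

theorem bondPairs2_eq_sum (E : Finset (ℤ × ℤ)) :
    bondPairs2 E = ∑ v ∈ unitSteps, #{x ∈ E | x + v ∈ E} := by
  simp only [bondPairs2, adj2_iff_sub_mem_unitSteps]
  exact ncard_setOf_sub_mem_eq_sum _ _ (· ∈ E)

theorem theta2_add_bondPairs2 (E : Finset (ℤ × ℤ)) : theta2 E + bondPairs2 E = 4 * #E := by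
  rw [theta2_eq_sum, bondPairs2_eq_sum, ← sum_add_distrib]
  simp only [add_comm #{x ∈ E | _ ∉ E}, card_filter_add_card_filter_not, sum_const, smul_eq_mul]
  rfl

theorem bondPairs2_eq (E : Finset (ℤ × ℤ)) :
    bondPairs2 E = 2 * (#{x ∈ E | x + (1, 0) ∈ E} + #{x ∈ E | x + (0, 1) ∈ E}) := by
  rw [bondPairs2_eq_sum, unitSteps, sum_insert (by decide), sum_insert (by decide),
    sum_insert (by decide), sum_singleton]
  rw [← card_filter_add_neg_mem E (1, 0), ← card_filter_add_neg_mem E (0, 1)]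
  simp only [Prod.neg_mk, neg_zero]
  ring

theorem bonds2_eq (E : Finset (ℤ × ℤ)) :
    bonds2 E = #{x ∈ E | x + (1, 0) ∈ E} + #{x ∈ E | x + (0, 1) ∈ E} := by
  rw [bonds2, bondPairs2_eq]; omega

theorem theta2_add_two_mul_bonds2 (E : Finset (ℤ × ℤ)) : theta2 E + 2 * bonds2 E = 4 * #E := by
  rw [← theta2_add_bondPairs2, bondPairs2_eq, bonds2_eq]

/-- `r` labels rows and `f` steps along a row, strictly increasing `g`; the `g`-largest point of
each row is not counted on the left. -/
theorem card_filter_map_mem_add_card_image_le {γ β δ : Type*} [DecidableEq γ] [DecidableEq β]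
    [LinearOrder δ] (E : Finset γ) (f : γ → γ) (r : γ → β) (g : γ → δ)
    (hr : ∀ x, r (f x) = r x) (hg : ∀ x, g x < g (f x)) :
    #{x ∈ E | f x ∈ E} + #(E.image r) ≤ #E := by
  set top := {x ∈ E | ∀ z ∈ E, r z = r x → g z ≤ g x}
  have hdisj : Disjoint {x ∈ E | f x ∈ E} top := by
    refine disjoint_filter.2 fun x _ hfx hx => ?_
    exact (hg x).not_ge (hx _ hfx (hr x))
  have himage : E.image r ⊆ top.image r := by
    intro y hy
    obtain ⟨x, hx, rfl⟩ := mem_image.1 hy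
    obtain ⟨z, hz, hmax⟩ := exists_max_image {z ∈ E | r z = r x} g ⟨x, mem_filter.2 ⟨hx, rfl⟩⟩
    obtain ⟨hzE, hzx⟩ := mem_filter.1 hz
    refine mem_image.2 ⟨z, mem_filter.2 ⟨hzE, fun w hw hwz => ?_⟩, hzx⟩
    exact hmax w (mem_filter.2 ⟨hw, hwz.trans hzx⟩)
  calc #{x ∈ E | f x ∈ E} + #(E.image r)
      ≤ #{x ∈ E | f x ∈ E} + #top := by gcongr; exact (card_le_card himage).trans card_image_le
    _ = #({x ∈ E | f x ∈ E} ∪ top) := (card_union_of_disjoint hdisj).symm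
    _ ≤ #E := card_le_card (union_subset (filter_subset _ _) (filter_subset _ _))

theorem bonds2_add_card_image_fst_add_card_image_snd_le (E : Finset (ℤ × ℤ)) :
    bonds2 E + #(E.image Prod.fst) + #(E.image Prod.snd) ≤ 2 * #E := by
  have hrows := card_filter_map_mem_add_card_image_le E (· + (1, 0)) Prod.snd Prod.fst
    (fun _ => by simp) (fun _ => by simp)
  have hcols := card_filter_map_mem_add_card_image_le E (· + (0, 1)) Prod.fst Prod.snd
    (fun _ => by simp) (fun _ => by simp)
  rw [bonds2_eq]
  omega

theorem bonds2_le (E : Finset (ℤ × ℤ)) : (bonds2 E : ℝ) ≤ 2 * #E - 2 * √(#E : ℝ) := by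
  have hsum := bonds2_add_card_image_fst_add_card_image_snd_le E
  have hprod : #E ≤ #(E.image Prod.fst) * #(E.image Prod.snd) :=
    (card_le_card subset_product).trans (card_product _ _).le
  generalize #(E.image Prod.fst) = c at hsum hprod
  generalize #(E.image Prod.snd) = r at hsum hprod
  have hsqrt : 2 * √(#E : ℝ) ≤ c + r := by
    rw [← le_div_iff₀' two_pos, Real.sqrt_le_left (by positivity)]
    have : (#E : ℝ) ≤ c * r := by exact_mod_cast hprod
    nlinarith [sq_nonneg ((c : ℝ) - r)]
  have : (bonds2 E : ℝ) + c + r ≤ 2 * #E := by exact_mod_cast hsum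
  linarith

def rowMajor (c i : ℕ) : ℤ × ℤ := ((i % c : ℕ), (i / c : ℕ))

theorem rowMajor_injective (c : ℕ) : Function.Injective (rowMajor c) := by
  intro i j h
  simp only [rowMajor, Prod.mk.injEq, Nat.cast_inj] at h
  rw [← Nat.div_add_mod i c, ← Nat.div_add_mod j c, h.1, h.2]

theorem rowMajor_add_self {c : ℕ} (hc : 0 < c) (i : ℕ) :
    rowMajor c (i + c) = rowMajor c i + (0, 1) := by
  simp [rowMajor, Nat.add_div_right i hc]

theorem rowMajor_succ {c i : ℕ} (h : ¬ c ∣ i + 1) : rowMajor c (i + 1) = rowMajor c i + (1, 0) := by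
  have hmod : (i + 1) % c = i % c + 1 := by
    have h1 := Nat.div_add_mod (i + 1) c
    have h2 := Nat.div_add_mod i c
    rw [Nat.succ_div_of_not_dvd h] at h1
    omega
  simp [rowMajor, hmod, Nat.succ_div_of_not_dvd h]

theorem two_mul_add_one_le_bonds2_rowMajor {c : ℕ} (hc : 0 < c) (n : ℕ) :
    2 * n + 1 ≤ bonds2 ((range (n + 1)).image (rowMajor c)) + c + n / c := by
  set F := (range (n + 1)).image (rowMajor c)
  have hmem {i : ℕ} (hi : i < n + 1) : rowMajor c i ∈ F := mem_image_of_mem _ (mem_range.2 hi)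
  have hrow : #{i ∈ range n | ¬ c ∣ i + 1} ≤ #{x ∈ F | x + (1, 0) ∈ F} := by
    refine card_le_card_of_injOn _ (fun i hi => ?_) (rowMajor_injective c).injOn
    obtain ⟨hi, hdvd⟩ := mem_filter.1 hi
    rw [mem_range] at hi
    exact mem_filter.2 ⟨hmem (by omega), rowMajor_succ hdvd ▸ hmem (by omega)⟩
  have hcol : #(range (n + 1 - c)) ≤ #{x ∈ F | x + (0, 1) ∈ F} := by
    refine card_le_card_of_injOn _ (fun i hi => ?_) (rowMajor_injective c).injOn
    rw [mem_coe, mem_range] at hi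
    exact mem_filter.2 ⟨hmem (by omega), rowMajor_add_self hc i ▸ hmem (by omega)⟩
  have hmult := Nat.card_multiples n c
  have hsplit := card_filter_add_card_filter_not (s := range n) (fun i => c ∣ i + 1)
  rw [card_range] at hcol hsplit
  rw [bonds2_eq]
  omega

theorem sq_sqrt_succ_add_div_lt (n : ℕ) :
    (Nat.sqrt n + 1 + n / (Nat.sqrt n + 1)) ^ 2 < 4 * (n + 1) := by
  set k := Nat.sqrt n
  set q := n / (k + 1)
  have hk : k * k ≤ n := Nat.sqrt_le n
  have hk' : n < (k + 1) * (k + 1) := Nat.lt_succ_sqrt n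
  have hq : q * (k + 1) ≤ n := Nat.div_mul_le_self n (k + 1)
  have hq' : n < q * (k + 1) + (k + 1) := Nat.lt_div_mul_add k.succ_pos
  have hqk : q ≤ k := by nlinarith
  have hkq : k ≤ q + 1 := by nlinarith
  nlinarith

theorem exists_card_eq_floor_le_bonds2 (d : ℕ) :
    ∃ F : Finset (ℤ × ℤ), #F = d ∧ ⌊2 * (d : ℝ) - 2 * √(d : ℝ)⌋ ≤ bonds2 F := by
  rcases d with _ | n
  · exact ⟨∅, rfl, by simp⟩
  set c := Nat.sqrt n + 1
  refine ⟨(range (n + 1)).image (rowMajor c), ?_, Int.floor_le_iff.2 ?_⟩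
  · rw [card_image_of_injective _ (rowMajor_injective c), card_range]
  have hbonds := two_mul_add_one_le_bonds2_rowMajor (Nat.succ_pos (Nat.sqrt n)) n
  have hsq := sq_sqrt_succ_add_div_lt n
  generalize bonds2 _ = b at hbonds
  generalize n / c = q at hbonds hsq
  have hsqrt : ((c + q : ℕ) : ℝ) / 2 < √((n + 1 : ℕ) : ℝ) := by
    rw [Real.lt_sqrt (by positivity), div_pow]
    have : (((c + q) ^ 2 : ℕ) : ℝ) < ((4 * (n + 1) : ℕ) : ℝ) := by exact_mod_cast hsq
    push_cast at this ⊢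
    linarith
  have : (2 * n + 1 : ℝ) ≤ b + c + q := by exact_mod_cast hbonds
  push_cast at hsqrt ⊢
  linarith

/-- a `d`-element `E ⊂ ℤ²` minimizes the edge perimeter iff its
number of unit bonds equals `⌊2d − 2√d⌋`. -/
theorem minimizer2_iff_bonds (d : ℕ) (E : Finset (ℤ × ℤ)) (hE : E.card = d) :
    (∀ F : Finset (ℤ × ℤ), F.card = d → theta2 E ≤ theta2 F) ↔
      (bonds2 E : ℤ) = ⌊(2 * (d : ℝ) - 2 * Real.sqrt d)⌋ := by
  have hle : ∀ F : Finset (ℤ × ℤ), #F = d → (bonds2 F : ℤ) ≤ ⌊2 * (d : ℝ) - 2 * √(d : ℝ)⌋ :=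
    fun F hF => Int.le_floor.2 (by exact_mod_cast hF ▸ bonds2_le F)
  obtain ⟨F₀, hF₀, hF₀_ge⟩ := exists_card_eq_floor_le_bonds2 d
  have hθ : ∀ F : Finset (ℤ × ℤ), #F = d → theta2 F + 2 * bonds2 F = 4 * d :=
    fun F hF => hF ▸ theta2_add_two_mul_bonds2 F
  have hE_le := hle E hE
  constructor
  · intro hmin
    have := hmin F₀ hF₀
    have := hθ E hE
    have := hθ F₀ hF₀
    omega
  · intro heq F hF
    have := hle F hF
    have := hθ E hE
    have := hθ F hF
    omega
end

section
/- The sequence d_s := s² − s⌊√s⌋ − ⌊s/4⌋, for s = 2, 3, 4, ..., is strictly increasing. -/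
/-- the sequence `d_s = s² − s⌊√s⌋ − ⌊s/4⌋` is strictly
increasing for `s ≥ 2`. -/
theorem ds_strictMono (s : ℕ) (hs : 2 ≤ s) :
    s ^ 2 - s * Nat.sqrt s - s / 4 <
      (s + 1) ^ 2 - (s + 1) * Nat.sqrt (s + 1) - (s + 1) / 4 := by
  have s2 : Nat.sqrt 2 = 1 := (Nat.eq_sqrt.mpr (by norm_num)).symm
  have s3 : Nat.sqrt 3 = 1 := (Nat.eq_sqrt.mpr (by norm_num)).symm
  have s4 : Nat.sqrt 4 = 2 := (Nat.eq_sqrt.mpr (by norm_num)).symm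
  rcases lt_or_ge s 4 with h4 | h4
  · interval_cases s <;> norm_num [s2, s3, s4]
  · obtain ⟨t, rfl⟩ : ∃ t, s = t + 4 := ⟨s - 4, by omega⟩
    have hq : Nat.sqrt (t + 4) ≤ t + 2 := by
      have h : Nat.sqrt (t + 4) < t + 3 := Nat.sqrt_lt.mpr (by nlinarith)
      omega
    have h1 : Nat.sqrt (t + 4 + 1) ≤ Nat.sqrt (t + 4) + 1 :=
      Nat.sqrt_succ_le_succ_sqrt (t + 4)
    have hA : (t + 4) * Nat.sqrt (t + 4) ≤ t * t + 6 * t + 8 := by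
      calc (t + 4) * Nat.sqrt (t + 4) ≤ (t + 4) * (t + 2) :=
            Nat.mul_le_mul_left _ hq
        _ = t * t + 6 * t + 8 := by ring
    have hB : (t + 4 + 1) * Nat.sqrt (t + 4 + 1)
        ≤ (t + 4) * Nat.sqrt (t + 4) + Nat.sqrt (t + 4) + t + 5 := by
      calc (t + 4 + 1) * Nat.sqrt (t + 4 + 1) ≤ (t + 4 + 1) * (Nat.sqrt (t + 4) + 1) :=
            Nat.mul_le_mul_left _ h1
        _ = (t + 4) * Nat.sqrt (t + 4) + Nat.sqrt (t + 4) + t + 5 := by ring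
    have e2 : (t + 4) ^ 2 = t * t + 8 * t + 16 := by ring
    have e3 : (t + 4 + 1) ^ 2 = t * t + 10 * t + 25 := by ring
    rw [e2, e3]
    set C := t * t with hC
    set A := (t + 4) * Nat.sqrt (t + 4) with hA'
    set B := (t + 4 + 1) * Nat.sqrt (t + 4 + 1) with hB'
    set q := Nat.sqrt (t + 4) with hq'
    omega
end

section
/- For the sequence d_s = s² − s⌊√s⌋ − ⌊s/4⌋ (s ≥ 2), one has s − ⌊√(d_s)⌋ ≥ ⌊√s⌋/2. -/
/-- with `d_s = s² − s⌊√s⌋ − ⌊s/4⌋` one has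
`s − ⌊√(d_s)⌋ ≥ ⌊√s⌋/2` for all `s ≥ 2`. -/
theorem sub_sqrt_ds_lower_bound (s : ℕ) (hs : 2 ≤ s) :
    ((Nat.sqrt s : ℚ)) / 2 ≤ (s : ℚ) - Nat.sqrt (s ^ 2 - s * Nat.sqrt s - s / 4) := by
  set r := Nat.sqrt s with hr
  set d := s ^ 2 - s * r - s / 4 with hd
  have hrs : r ≤ s := Nat.sqrt_le_self s
  have hsr : s * r ≤ s ^ 2 := by
    calc s * r ≤ s * s := Nat.mul_le_mul_left _ hrs
    _ = s ^ 2 := by ring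
  have hdle : d ≤ s ^ 2 - s * r := Nat.sub_le _ _
  have h1 : Nat.sqrt d ^ 2 ≤ d := Nat.sqrt_le' d
  have key : 2 * Nat.sqrt d + r ≤ 2 * s := by
    have h2 : (2 * Nat.sqrt d) ^ 2 ≤ (2 * s - r) ^ 2 := by
      zify [hsr, hrs, show r ≤ 2 * s by omega] at *
      nlinarith
    have h3 : 2 * Nat.sqrt d ≤ 2 * s - r :=
      (Nat.pow_le_pow_iff_left (by norm_num)).mp h2
    omega
  have keyQ : (2 * Nat.sqrt d + r : ℚ) ≤ 2 * s := by exact_mod_cast key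
  push_cast at keyQ
  linarith
end

section
/- Let s ≥ 2, p = ⌊√s⌋, q = ⌊s/4⌋, d_s = s² − sp − q, and let W² = Z² ∩ [1, ⌊√(d_s)⌋]² be the square Wulff shape with ⌊√(d_s)⌋² points. Then for every translation vector a ∈ Z², the symmetric difference of R_{s,p,q} and a + W² has cardinality at least (1/2)·⌊√s⌋·(s − ⌊√s⌋ − 1). -/
/-!
The rectangle `[1, s−p−1] × [1, s]` lies in `R_{s,p,q}`, and each of its `s − p − 1` columns
has height `s`, while a translate of the square of side `k = ⌊√(d_s)⌋` meets a column in at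
most `k` points. So at least `(s − p − 1)(s − k)` points of the rectangle lie outside the
square, and `k² ≤ s² − sp ≤ (s − p/2)²` gives `s − k ≥ p/2`.
-/

open Finset Filter

/-- The configuration `R_{s,p,q} ⊂ ℤ²`: the lattice points of the rectangle
`[1, s−p−1] × [1, s]` together with the column `{s−p} × [1, s−q]`. -/
noncomputable def Rspq (s p q : ℕ) : Finset (ℤ × ℤ) :=
  (Icc (1 : ℤ) ((s : ℤ) - p - 1) ×ˢ Icc (1 : ℤ) (s : ℤ)) ∪
    ({(s : ℤ) - p} ×ˢ Icc (1 : ℤ) ((s : ℤ) - q))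

/-- The square Wulff shape `W² = ℤ² ∩ [1, k]²`. -/
noncomputable def wulff2 (k : ℕ) : Finset (ℤ × ℤ) := Icc (1 : ℤ) (k : ℤ) ×ˢ Icc (1 : ℤ) (k : ℤ)

/-- Translation of a finite subset of `ℤ²` by `a`. -/
def translate2 (a : ℤ × ℤ) (F : Finset (ℤ × ℤ)) : Finset (ℤ × ℤ) :=
  F.image fun x => (a.1 + x.1, a.2 + x.2)

lemma translate2_wulff2 (a : ℤ × ℤ) (k : ℕ) :
    translate2 a (wulff2 k) =
      Icc (a.1 + 1) (a.1 + (k : ℤ)) ×ˢ Icc (a.2 + 1) (a.2 + (k : ℤ)) := by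
  ext ⟨x, y⟩
  simp only [translate2, wulff2, mem_image, mem_product, mem_Icc, Prod.ext_iff, Prod.exists]
  constructor
  · rintro ⟨u, v, ⟨⟨h1, h2⟩, h3, h4⟩, h5, h6⟩
    omega
  · rintro ⟨⟨h1, h2⟩, h3, h4⟩
    exact ⟨x - a.1, y - a.2, ⟨⟨by omega, by omega⟩, by omega, by omega⟩, by omega, by omega⟩

lemma Finset.card_mul_sub_card_le_card_product_sdiff_product {α β : Type*} [DecidableEq α]
    [DecidableEq β] (s u : Finset α) (t v : Finset β) :
    #s * (#t - #v) ≤ #(s ×ˢ t \ u ×ˢ v) := by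
  have hsub : s ×ˢ (t \ v) ⊆ s ×ˢ t \ u ×ˢ v := by
    intro x hx
    simp only [mem_product, mem_sdiff] at hx ⊢
    exact ⟨⟨hx.1, hx.2.1⟩, fun h => hx.2.2 h.2⟩
  calc #s * (#t - #v) ≤ #s * #(t \ v) := Nat.mul_le_mul_left _ (le_card_sdiff v t)
    _ = #(s ×ˢ (t \ v)) := (card_product _ _).symm
    _ ≤ _ := card_le_card hsub

lemma Nat.add_two_mul_le_of_sq_add_mul_le {s p k : ℕ} (hp : p ≤ s)
    (h : k ^ 2 + s * p ≤ s ^ 2) : p + 2 * k ≤ 2 * s := by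
  nlinarith

/-- for `s ≥ 2`, `p = ⌊√s⌋`, `q = ⌊s/4⌋`, `d_s = s² − sp − q`,
and the square Wulff shape `W² = ℤ² ∩ [1, ⌊√(d_s)⌋]²`, every translate of `W²`
differs from `R_{s,p,q}` by at least `½·⌊√s⌋·(s − ⌊√s⌋ − 1)` points. -/
theorem Rspq_symmDiff_lower_bound (s : ℕ) (hs : 2 ≤ s) (a : ℤ × ℤ) :
    (Nat.sqrt s : ℚ) * ((s : ℚ) - Nat.sqrt s - 1) / 2 ≤
      (((Rspq s (Nat.sqrt s) (s / 4) \
            translate2 a (wulff2 (Nat.sqrt (s ^ 2 - s * Nat.sqrt s - s / 4)))) ∪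
          (translate2 a (wulff2 (Nat.sqrt (s ^ 2 - s * Nat.sqrt s - s / 4))) \
            Rspq s (Nat.sqrt s) (s / 4))).card : ℚ) := by
  set p := Nat.sqrt s
  set k := Nat.sqrt (s ^ 2 - s * p - s / 4)
  have hp : p < s := Nat.sqrt_lt_self hs
  have hsp : s * p ≤ s ^ 2 := by rw [sq]; exact Nat.mul_le_mul_left s hp.le
  have hk_sq : k ^ 2 + s * p ≤ s ^ 2 := by
    have : k ^ 2 ≤ s ^ 2 - s * p - s / 4 := Nat.sqrt_le' _
    omega
  have hk : p + 2 * k ≤ 2 * s := Nat.add_two_mul_le_of_sq_add_mul_le hp.le hk_sq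
  rw [translate2_wulff2]
  set rect := Icc (1 : ℤ) (s - p - 1) ×ˢ Icc (1 : ℤ) s
  set square := Icc (a.1 + 1) (a.1 + (k : ℤ)) ×ˢ Icc (a.2 + 1) (a.2 + (k : ℤ))
  have hsub : rect \ square ⊆ (Rspq s p (s / 4) \ square) ∪ (square \ Rspq s p (s / 4)) :=
    (sdiff_subset_sdiff subset_union_left Subset.rfl).trans subset_union_left
  have hcard : (s - p - 1) * (s - k) ≤ #(rect \ square) := by
    have h := card_mul_sub_card_le_card_product_sdiff_product (Icc (1 : ℤ) (s - p - 1))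
      (Icc (a.1 + 1) (a.1 + (k : ℤ))) (Icc (1 : ℤ) s) (Icc (a.2 + 1) (a.2 + (k : ℤ)))
    simp only [Int.card_Icc] at h
    convert h using 2 <;> omega
  calc (p : ℚ) * (s - p - 1) / 2 ≤ ((s - p - 1) * (s - k) : ℕ) := by
        push_cast [Nat.sub_sub, show p + 1 ≤ s from hp, show k ≤ s by omega]
        have hk' : (p : ℚ) + 2 * k ≤ 2 * s := by exact_mod_cast hk
        have hp' : (p : ℚ) + 1 ≤ s := by exact_mod_cast Nat.succ_le_of_lt hp
        nlinarith
    _ ≤ _ := by exact_mod_cast hcard.trans (card_le_card hsub)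
end
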